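/- arXiv:1406.6144 — 4 statements merged into one kernel-verified Lean document; each statement's English description precedes it below -/
import Mathlib

section
/- For any regular expression E over an alphabet Σ and any word w ∈ Σ*, the word w belongs to L(E) if and only if there exists an expression E' in the set of Antimirov partial derivatives of E with respect to w such that ε ∈ L(E'). -/
/-!
The partial derivatives of `E` with respect to a symbol `a` jointly recognise exactly the words
`w` with `a :: w ∈ L(E)`; this is checked constructor by constructor, splitting off the first
nonempty factor in a concatenation or a star. Induction on the word then gives the theorem.
-/

open RegularExpression

/-- Antimirov partial derivative of a regular expression w.r.t. a symbol. -/
def pderiv {α : Type*} [DecidableEq α] (a : α) :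
    RegularExpression α → Set (RegularExpression α)
  | RegularExpression.zero => ∅
  | RegularExpression.epsilon => ∅
  | RegularExpression.char b => if b = a then {RegularExpression.epsilon} else ∅
  | RegularExpression.plus E₁ E₂ => pderiv a E₁ ∪ pderiv a E₂
  | RegularExpression.comp E₁ E₂ =>
      ((fun E => RegularExpression.comp E E₂) '' pderiv a E₁) ∪
        {E | E ∈ pderiv a E₂ ∧ ([] : List α) ∈ E₁.matches'}
  | RegularExpression.star E₁ =>
      (fun E => RegularExpression.comp E (RegularExpression.star E₁)) '' pderiv a E₁

/-- Antimirov partial derivative w.r.t. a word. -/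
def pderivWord {α : Type*} [DecidableEq α] :
    RegularExpression α → List α → Set (RegularExpression α)
  | E, [] => {E}
  | E, a :: w => ⋃ E' ∈ pderiv a E, pderivWord E' w

open Computability

namespace Language

variable {α : Type*} {l m : Language α} {a : α} {w : List α}

theorem cons_mem_mul_iff :
    a :: w ∈ l * m ↔ (∃ u, a :: u ∈ l ∧ ∃ v ∈ m, u ++ v = w) ∨ ([] ∈ l ∧ a :: w ∈ m) := by
  constructor
  · rintro ⟨_ | ⟨b, u⟩, hu, v, hv, huv⟩
    · exact .inr ⟨hu, huv ▸ hv⟩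
    · obtain ⟨rfl, rfl⟩ := List.cons.inj huv
      exact .inl ⟨u, hu, v, hv, rfl⟩
  · rintro (⟨u, hu, v, hv, rfl⟩ | ⟨hl, hm⟩)
    · exact ⟨a :: u, hu, v, hv, rfl⟩
    · exact ⟨[], hl, a :: w, hm, rfl⟩

theorem cons_mem_kstar_iff :
    a :: w ∈ l∗ ↔ ∃ u, a :: u ∈ l ∧ ∃ v ∈ l∗, u ++ v = w := by
  constructor
  · rw [mem_kstar_iff_exists_nonempty]
    rintro ⟨_ | ⟨_ | ⟨b, u⟩, L⟩, hw, hL⟩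
    · cases hw
    · exact absurd rfl (hL [] List.mem_cons_self).2
    · obtain ⟨rfl, rfl⟩ := List.cons.inj hw
      exact ⟨u, (hL _ List.mem_cons_self).1, L.flatten,
        join_mem_kstar fun y hy => (hL y (List.mem_cons_of_mem _ hy)).1, rfl⟩
  · rintro ⟨u, hu, v, hv, rfl⟩
    exact (mul_kstar_le_kstar : l * l∗ ≤ l∗) ⟨a :: u, hu, v, hv, rfl⟩

end Language

section

variable {α : Type*} [DecidableEq α]

theorem cons_mem_matches'_iff_exists_pderiv (a : α) (E : RegularExpression α) (w : List α) :
    a :: w ∈ E.matches' ↔ ∃ E' ∈ pderiv a E, w ∈ E'.matches' := by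
  induction E generalizing w with
  | zero => simp [pderiv]
  | epsilon => simp [pderiv]
  | char b =>
    change a :: w = [b] ↔ _
    by_cases h : b = a
    · simp [pderiv, h, one_def]
    · simp [pderiv, h, Ne.symm h]
  | plus P Q ihP ihQ =>
    simp only [plus_def, matches'_add, Language.mem_add, ihP, ihQ, pderiv, Set.mem_union,
      or_and_right, exists_or]
  | comp P Q ihP ihQ =>
    rw [comp_def, matches'_mul, Language.cons_mem_mul_iff]
    simp only [pderiv, Set.mem_union, or_and_right, exists_or, Set.exists_mem_image, comp_def,
      matches'_mul, Language.mem_mul, ihP, ihQ]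
    aesop
  | star P ihP =>
    rw [matches'_star, Language.cons_mem_kstar_iff]
    simp only [pderiv, Set.exists_mem_image, comp_def, matches'_mul, Language.mem_mul, ihP,
      matches'_star]
    aesop

theorem mem_pderivWord_cons {E F : RegularExpression α} {a : α} {w : List α} :
    F ∈ pderivWord E (a :: w) ↔ ∃ E' ∈ pderiv a E, F ∈ pderivWord E' w := by
  simp [pderivWord]

end

/-- A word belongs to the language of `E` iff some partial derivative of `E`
w.r.t. the word accepts the empty word. -/
theorem antimirov_membership {α : Type*} [DecidableEq α]
    (E : RegularExpression α) (w : List α) :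
    w ∈ E.matches' ↔ ∃ E' ∈ pderivWord E w, ([] : List α) ∈ E'.matches' := by
  induction w generalizing E with
  | nil => simp [pderivWord]
  | cons a w ih =>
    simp only [cons_mem_matches'_iff_exists_pderiv, ih, mem_pderivWord_cons]
    aesop
end

section
/- Under the same hypotheses (X a functional non-crossing substitution set, r compatible with X, r' the realization X-associated with r), for every constrained expression E one has L_{I,r}(E) = L_{I,r'}(E_X). -/
open Computability

/-- Words over the symbol alphabet `A` and the variable alphabet `V`. -/
abbrev Word (A V : Type) := List (A ⊕ V)

/-- Terms over an expression environment: variables, the empty word, letters,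
catenation (the built-in binary function symbol `·`) and extra function symbols `F`. -/
inductive Tm (A V : Type) (F : ℕ → Type) : Type
  | var : V → Tm A V F
  | eps : Tm A V F
  | ltr : A → Tm A V F
  | cat : Tm A V F → Tm A V F → Tm A V F
  | app : {k : ℕ} → F k → (Fin k → Tm A V F) → Tm A V F

/-- Quantifier-free boolean formulae: predicate symbols from `P` applied to terms,
combined by arbitrary `k`-ary boolean operators. -/
inductive Fm (A V : Type) (P F : ℕ → Type) : Type
  | atom : {k : ℕ} → P k → (Fin k → Tm A V F) → Fm A V P F
  | op : {k : ℕ} → ((Fin k → Bool) → Bool) → (Fin k → Fm A V P F) → Fm A V P F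

/-- An expression interpretation: domain `Σ*` (i.e. `List A`), letters, `ε` and
catenation interpreted standardly; the remaining function and predicate symbols
are interpreted by arbitrary (total, functional) maps. -/
structure Interp (A V : Type) (P F : ℕ → Type) where
  fn : {k : ℕ} → F k → (Fin k → List A) → List A
  pr : {k : ℕ} → P k → (Fin k → List A) → Bool

/-- Evaluation of a term under an interpretation and a realization `r : V → Σ*`. -/
def Tm.eval {A V : Type} {P F : ℕ → Type} (I : Interp A V P F) (r : V → List A) :
    Tm A V F → List A
  | .var x => r x
  | .eps => []
  | .ltr a => [a]
  | .cat t u => Tm.eval I r t ++ Tm.eval I r u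
  | .app f ts => I.fn f fun i => Tm.eval I r (ts i)

/-- Evaluation of a boolean formula under an interpretation and a realization. -/
def Fm.eval {A V : Type} {P F : ℕ → Type} (I : Interp A V P F) (r : V → List A) :
    Fm A V P F → Bool
  | .atom p ts => I.pr p fun i => Tm.eval I r (ts i)
  | .op o fs => o fun i => Fm.eval I r (fs i)

/-- Extension of a realization to a monoid morphism `(Σ ∪ Γ)* → Σ*`. -/
def rWord {A V : Type} (r : V → List A) (α : Word A V) : List A :=
  α.flatMap (Sum.elim (fun a => [a]) r)

/-- Constrained expressions over an expression environment `(A, V, P, F)`,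
with sum as the only boolean operator over expressions. -/
inductive CExp (A V : Type) (P F : ℕ → Type) : Type
  | zero : CExp A V P F
  | word : Word A V → CExp A V P F
  | plus : CExp A V P F → CExp A V P F → CExp A V P F
  | comp : CExp A V P F → CExp A V P F → CExp A V P F
  | star : CExp A V P F → CExp A V P F
  | constr : CExp A V P F → Fm A V P F → CExp A V P F
  | mtch : Word A V → CExp A V P F → CExp A V P F

/-- The `(I,r)`-language of a constrained expression. -/
def CExp.lang {A V : Type} {P F : ℕ → Type} (I : Interp A V P F) (r : V → List A) :
    CExp A V P F → Language A
  | .zero => 0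
  | .word α => {rWord r α}
  | .plus E₁ E₂ => CExp.lang I r E₁ + CExp.lang I r E₂
  | .comp E₁ E₂ => CExp.lang I r E₁ * CExp.lang I r E₂
  | .star E₁ => (CExp.lang I r E₁)∗
  | .constr E₁ φ => if Fm.eval I r φ then CExp.lang I r E₁ else 0
  | .mtch α E₁ => {w | w = rWord r α ∧ w ∈ CExp.lang I r E₁}

/-- The `I`-language of a constrained expression: union over all realizations. -/
def langI {A V : Type} {P F : ℕ → Type} (I : Interp A V P F) (E : CExp A V P F) :
    Language A :=
  {w | ∃ r : V → List A, w ∈ CExp.lang I r E}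

/-- Substitution of the word `w` for every occurrence of the variable `x` in a word. -/
def substW {A V : Type} [DecidableEq V] (x : V) (w : Word A V) : Word A V → Word A V
  | [] => []
  | Sum.inl a :: α => Sum.inl a :: substW x w α
  | Sum.inr y :: α => (if y = x then w else [Sum.inr y]) ++ substW x w α

/-- Simultaneous substitution of words for variables in a word. -/
def substAllW {A V : Type} (σ : V → Word A V) (α : Word A V) : Word A V :=
  α.flatMap (Sum.elim (fun a => [Sum.inl a]) σ)

/-- The term associated with a single symbol. -/
def symTm {A V : Type} {F : ℕ → Type} : (A ⊕ V) → Tm A V F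
  | Sum.inl a => .ltr a
  | Sum.inr x => .var x

/-- The term `Term(w)` associated with a word. -/
def wordTm {A V : Type} {F : ℕ → Type} : Word A V → Tm A V F
  | [] => .eps
  | [c] => symTm c
  | c :: α => .cat (symTm c) (wordTm α)

/-- Simultaneous substitution in a term. -/
def Tm.substAll {A V : Type} {F : ℕ → Type} (σ : V → Word A V) : Tm A V F → Tm A V F
  | .var x => wordTm (σ x)
  | .eps => .eps
  | .ltr a => .ltr a
  | .cat t u => .cat (Tm.substAll σ t) (Tm.substAll σ u)
  | .app f ts => .app f fun i => Tm.substAll σ (ts i)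

/-- Simultaneous substitution in a boolean formula. -/
def Fm.substAll {A V : Type} {P F : ℕ → Type} (σ : V → Word A V) :
    Fm A V P F → Fm A V P F
  | .atom p ts => .atom p fun i => Tm.substAll σ (ts i)
  | .op o fs => .op o fun i => Fm.substAll σ (fs i)

/-- Substitution sets: sets of pairs (variable, word). -/
abbrev SubSet (A V : Type) := Set (V × Word A V)

/-- The substitution function associated with a (functional) substitution set. -/
noncomputable def SubSet.toSubst {A V : Type} (X : SubSet A V) (x : V) : Word A V :=
  open Classical in
  if h : ∃ w, (x, w) ∈ X then h.choose else [Sum.inr x]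

/-- Application of a substitution set to a word. -/
noncomputable def applyW {A V : Type} (X : SubSet A V) (α : Word A V) : Word A V :=
  substAllW X.toSubst α

/-- Application of a substitution set to a boolean formula. -/
noncomputable def applyF {A V : Type} {P F : ℕ → Type} (X : SubSet A V)
    (φ : Fm A V P F) : Fm A V P F :=
  Fm.substAll X.toSubst φ

/-- A substitution set is functional if no variable is bound to two distinct words. -/
def SubSet.Functional {A V : Type} (X : SubSet A V) : Prop :=
  ∀ x w w', (x, w) ∈ X → (x, w') ∈ X → w = w'

/-- A substitution set is non-crossing if for distinct pairs `(x,w)` and `(x',w')`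
in it, `x` does not occur in `w'`. -/
def SubSet.NonCrossing {A V : Type} (X : SubSet A V) : Prop :=
  ∀ x w x' w', (x, w) ∈ X → (x', w') ∈ X → (x, w) ≠ (x', w') → Sum.inr x ∉ w'

/-- A substitution set all of whose pairs have the form `(x, ax)` or `(x, ε)`. -/
def SubSet.Basic {A V : Type} (X : SubSet A V) : Prop :=
  ∀ x w, (x, w) ∈ X → w = [] ∨ ∃ a : A, w = [Sum.inl a, Sum.inr x]

/-- Simultaneous substitution in a constrained expression. -/
def CExp.substAll {A V : Type} {P F : ℕ → Type} (σ : V → Word A V) :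
    CExp A V P F → CExp A V P F
  | .zero => .zero
  | .word α => .word (substAllW σ α)
  | .plus E₁ E₂ => .plus (CExp.substAll σ E₁) (CExp.substAll σ E₂)
  | .comp E₁ E₂ => .comp (CExp.substAll σ E₁) (CExp.substAll σ E₂)
  | .star E₁ => .star (CExp.substAll σ E₁)
  | .constr E₁ φ => .constr (CExp.substAll σ E₁) (Fm.substAll σ φ)
  | .mtch α E₁ => .mtch (substAllW σ α) (CExp.substAll σ E₁)

/-- Application of a substitution set to a constrained expression. -/
noncomputable def applyE {A V : Type} {P F : ℕ → Type} (X : SubSet A V)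
    (E : CExp A V P F) : CExp A V P F :=
  CExp.substAll X.toSubst E


/-- A realization is compatible with a substitution set `X` if `r x` starts with `a`
whenever `(x, ax) ∈ X`, and `r x = ε` whenever `(x, ε) ∈ X`. -/
def Compatible {A V : Type} (r : V → List A) (X : SubSet A V) : Prop :=
  (∀ x a, (x, [Sum.inl a, Sum.inr x]) ∈ X → ∃ u, r x = a :: u) ∧
  (∀ x, (x, ([] : Word A V)) ∈ X → r x = [])

/-- The realization `X`-associated with `r`: it drops the leading symbol of `r x`
when `(x, ax) ∈ X` and `r x = a·w`, and agrees with `r` otherwise. -/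
noncomputable def assocReal {A V : Type} (r : V → List A) (X : SubSet A V) (x : V) :
    List A :=
  open Classical in
  if ∃ a u, (x, [Sum.inl a, Sum.inr x]) ∈ X ∧ r x = a :: u then (r x).tail else r x

/-! Under a compatible realization `r`, a pair `(x, a x)` of `X` turns `r x = a u` into
`a · r' x` with `r' x = u`, and a pair `(x, ε)` into `ε = r x`; so the substitution
`X.toSubst` evaluated under `r'` gives back `r` on every variable. Evaluation of words,
terms, formulae and languages commutes with any substitution having this property. -/

section SubstEval

variable {A V : Type} {P F : ℕ → Type}

@[simp]
lemma rWord_append (r : V → List A) (α β : Word A V) :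
    rWord r (α ++ β) = rWord r α ++ rWord r β := by
  simp [rWord]

lemma rWord_substAllW {r r' : V → List A} {σ : V → Word A V}
    (hσ : ∀ x, rWord r' (σ x) = r x) (α : Word A V) :
    rWord r' (substAllW σ α) = rWord r α := by
  induction α with
  | nil => rfl
  | cons c α ih =>
    change rWord r' (Sum.elim (fun a => [Sum.inl a]) σ c ++ substAllW σ α) =
      Sum.elim (fun a => [a]) r c ++ rWord r α
    rw [rWord_append, ih]
    rcases c with a | x
    · rfl
    · rw [Sum.elim_inr, hσ x]
      rfl

lemma Tm.eval_symTm (I : Interp A V P F) (r : V → List A) (c : A ⊕ V) :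
    Tm.eval I r (symTm c) = rWord r [c] := by
  rcases c with a | x <;> simp [symTm, Tm.eval, rWord]

lemma Tm.eval_wordTm (I : Interp A V P F) (r : V → List A) (w : Word A V) :
    Tm.eval I r (wordTm w) = rWord r w := by
  induction w with
  | nil => rfl
  | cons c α ih =>
    cases α with
    | nil => exact Tm.eval_symTm I r c
    | cons d β =>
      rw [show c :: d :: β = [c] ++ d :: β from rfl, rWord_append, ← ih,
        ← Tm.eval_symTm I r c]
      rfl

lemma Tm.eval_substAll (I : Interp A V P F) {r r' : V → List A} {σ : V → Word A V}
    (hσ : ∀ x, rWord r' (σ x) = r x) (t : Tm A V F) :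
    Tm.eval I r' (Tm.substAll σ t) = Tm.eval I r t := by
  induction t with
  | var x => simp [Tm.substAll, Tm.eval_wordTm, hσ x, Tm.eval]
  | eps => rfl
  | ltr a => rfl
  | cat t u iht ihu => simp [Tm.substAll, Tm.eval, iht, ihu]
  | app f ts ih => simp [Tm.substAll, Tm.eval, ih]

lemma Fm.eval_substAll (I : Interp A V P F) {r r' : V → List A} {σ : V → Word A V}
    (hσ : ∀ x, rWord r' (σ x) = r x) (φ : Fm A V P F) :
    Fm.eval I r' (Fm.substAll σ φ) = Fm.eval I r φ := by
  induction φ with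
  | atom p ts => simp [Fm.substAll, Fm.eval, Tm.eval_substAll I hσ]
  | op o fs ih => simp [Fm.substAll, Fm.eval, ih]

lemma CExp.lang_substAll (I : Interp A V P F) {r r' : V → List A} {σ : V → Word A V}
    (hσ : ∀ x, rWord r' (σ x) = r x) (E : CExp A V P F) :
    CExp.lang I r' (CExp.substAll σ E) = CExp.lang I r E := by
  induction E with
  | zero => rfl
  | word α => simp [CExp.substAll, CExp.lang, rWord_substAllW hσ]
  | plus E₁ E₂ ih₁ ih₂ => simp [CExp.substAll, CExp.lang, ih₁, ih₂]
  | comp E₁ E₂ ih₁ ih₂ => simp [CExp.substAll, CExp.lang, ih₁, ih₂]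
  | star E₁ ih => simp [CExp.substAll, CExp.lang, ih]
  | constr E₁ φ ih => simp [CExp.substAll, CExp.lang, ih, Fm.eval_substAll I hσ]
  | mtch α E₁ ih =>
    simp only [CExp.substAll, CExp.lang, ih, rWord_substAllW hσ]
    rfl

end SubstEval

section AssocReal

variable {A V : Type} {X : SubSet A V} {r : V → List A}

lemma SubSet.toSubst_mem {x : V} (h : ∃ w, (x, w) ∈ X) : (x, X.toSubst x) ∈ X := by
  rw [SubSet.toSubst, dif_pos h]
  exact h.choose_spec

lemma SubSet.toSubst_of_forall_not_mem {x : V} (h : ∀ w, (x, w) ∉ X) :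
    X.toSubst x = [Sum.inr x] := by
  rw [SubSet.toSubst, dif_neg (not_exists.2 h)]

lemma assocReal_of_mem {x : V} {a : A} {u : List A}
    (hx : (x, [Sum.inl a, Sum.inr x]) ∈ X) (hr : r x = a :: u) :
    assocReal r X x = u := by
  rw [assocReal, if_pos ⟨a, u, hx, hr⟩, hr, List.tail_cons]

lemma assocReal_of_forall_not_mem {x : V} (h : ∀ w, (x, w) ∉ X) :
    assocReal r X x = r x := by
  rw [assocReal, if_neg]
  rintro ⟨a, u, hx, -⟩
  exact h _ hx

lemma rWord_assocReal_toSubst (hB : X.Basic) (hr : Compatible r X) (x : V) :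
    rWord (assocReal r X) (X.toSubst x) = r x := by
  by_cases hx : ∃ w, (x, w) ∈ X
  · have hw := SubSet.toSubst_mem hx
    rcases hB x _ hw with h | ⟨a, h⟩ <;> rw [h] at hw ⊢
    · rw [hr.2 x hw]
      rfl
    · obtain ⟨u, hu⟩ := hr.1 x a hw
      simp [rWord, assocReal_of_mem hw hu, hu]
  · push Not at hx
    simp [SubSet.toSubst_of_forall_not_mem hx, assocReal_of_forall_not_mem hx, rWord]

end AssocReal

theorem lang_assoc_subst_general {A V : Type} {P F : ℕ → Type}
    (X : SubSet A V) (hB : X.Basic)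
    (I : Interp A V P F) (r : V → List A) (hr : Compatible r X)
    (E : CExp A V P F) :
    CExp.lang I r E = CExp.lang I (assocReal r X) (applyE X E) :=
  (CExp.lang_substAll I (rWord_assocReal_toSubst hB hr) E).symm

/-- Languages are invariant under transferring the assumptions of a functional
non-crossing substitution set from the realization to the expression:
`L_{I,r}(E) = L_{I,r'}(E_X)` where `r'` is the realization `X`-associated with `r`. -/
theorem lang_assoc_subst {A V : Type} {P F : ℕ → Type}
    (X : SubSet A V) (hB : X.Basic) (hF : X.Functional) (hN : X.NonCrossing)
    (I : Interp A V P F) (r : V → List A) (hr : Compatible r X)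
    (E : CExp A V P F) :
    CExp.lang I r E = CExp.lang I (assocReal r X) (applyE X E) :=
  lang_assoc_subst_general X hB I r hr E
end

section
/- For every constrained expression E (with + as the only boolean operator over expressions), interpretation I and realization r: Null_{I,r}(E) = 1 if and only if there exists a pair (X, φ) in the indicator set S^ε(E) such that (i) r(x) = ε for every x ∈ X, and (ii) eval_{I,r}(φ) = 1. -/
open Computability

/-- The set of variable symbols occurring in a word. -/
def varsW {A V : Type} (α : Word A V) : Set V := {x | Sum.inr x ∈ α}

/-- A word made only of variable symbols (i.e. a word of `Γ*`). -/
def onlyVars {A V : Type} (α : Word A V) : Prop := ∀ c ∈ α, ∃ x : V, c = Sum.inr x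

/-- The formula `⊤`. -/
def fmTrue {A V : Type} {P F : ℕ → Type} : Fm A V P F :=
  Fm.op (fun _ : Fin 0 → Bool => true) (fun i => i.elim0)

/-- Conjunction of two formulae. -/
def fmAnd {A V : Type} {P F : ℕ → Type} (φ ψ : Fm A V P F) : Fm A V P F :=
  Fm.op (fun v : Fin 2 → Bool => v 0 && v 1) ![φ, ψ]

/-- Substitution of `ε` for every variable of `X` in a term. -/
noncomputable def Tm.substEps {A V : Type} {F : ℕ → Type} (X : Set V) :
    Tm A V F → Tm A V F
  | .var x => open Classical in if x ∈ X then .eps else .var x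
  | .eps => .eps
  | .ltr a => .ltr a
  | .cat t u => .cat (Tm.substEps X t) (Tm.substEps X u)
  | .app f ts => .app f fun i => Tm.substEps X (ts i)

/-- Substitution of `ε` for every variable of `X` in a formula (`φ_{X←ε}`). -/
noncomputable def Fm.substEps {A V : Type} {P F : ℕ → Type} (X : Set V) :
    Fm A V P F → Fm A V P F
  | .atom p ts => .atom p fun i => Tm.substEps X (ts i)
  | .op o fs => .op o fun i => Fm.substEps X (fs i)

/-- The product `⊗` on indicator sets. -/
noncomputable def tensor {A V : Type} {P F : ℕ → Type}
    (S₁ S₂ : Set (Set V × Fm A V P F)) : Set (Set V × Fm A V P F) :=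
  {p | ∃ q₁ ∈ S₁, ∃ q₂ ∈ S₂,
      p = (q₁.1 ∪ q₂.1, Fm.substEps (q₁.1 ∪ q₂.1) (fmAnd q₁.2 q₂.2))}

/-- The indicator set `S^ε(E)`: pairs of a set of variables that must be erased and
a formula that must be satisfied for `ε` to belong to the language of `E`. -/
noncomputable def Seps {A V : Type} {P F : ℕ → Type} :
    CExp A V P F → Set (Set V × Fm A V P F)
  | .zero => ∅
  | .word α => {p | onlyVars α ∧ p = (varsW α, fmTrue)}
  | .mtch α E₁ => {p | onlyVars α ∧ p ∈ tensor {(varsW α, fmTrue)} (Seps E₁)}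
  | .plus E₁ E₂ => Seps E₁ ∪ Seps E₂
  | .comp E₁ E₂ => tensor (Seps E₁) (Seps E₂)
  | .star _ => {((∅ : Set V), fmTrue)}
  | .constr E₁ φ => {p | ∃ q ∈ Seps E₁, p = (q.1, Fm.substEps q.1 (fmAnd φ q.2))}

/-! Both sides are compositional in `E`: `ε` lies in a sum, product or constrained language
exactly when it lies in the pieces and the constraint holds, and `⊗` mirrors the product
because substituting `ε` for variables that `r` already erases does not change any
evaluation. -/

theorem Language.nil_mem_mul_iff {α : Type*} {l m : Language α} :
    [] ∈ l * m ↔ [] ∈ l ∧ [] ∈ m := by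
  simp [Language.mem_mul, List.append_eq_nil_iff]

section

variable {A V : Type} {P F : ℕ → Type} (I : Interp A V P F) (r : V → List A)

theorem Tm.eval_substEps {X : Set V} (hX : ∀ x ∈ X, r x = []) (t : Tm A V F) :
    (t.substEps X).eval I r = t.eval I r := by
  induction t with
  | var x =>
    by_cases hx : x ∈ X
    · simp [Tm.substEps, hx, Tm.eval, hX x hx]
    · simp [Tm.substEps, hx]
  | eps | ltr => rfl
  | cat t u iht ihu => simp only [Tm.substEps, Tm.eval, iht, ihu]
  | app f ts ih => simp only [Tm.substEps, Tm.eval, ih]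

theorem Fm.eval_substEps {X : Set V} (hX : ∀ x ∈ X, r x = []) (φ : Fm A V P F) :
    (φ.substEps X).eval I r = φ.eval I r := by
  induction φ with
  | atom p ts => simp only [Fm.substEps, Fm.eval, Tm.eval_substEps I r hX]
  | op o fs ih => simp only [Fm.substEps, Fm.eval, ih]

@[simp]
theorem Fm.eval_fmTrue : (fmTrue : Fm A V P F).eval I r = true := rfl

@[simp]
theorem Fm.eval_fmAnd (φ ψ : Fm A V P F) :
    (fmAnd φ ψ).eval I r = (φ.eval I r && ψ.eval I r) := by
  simp [fmAnd, Fm.eval]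

theorem rWord_eq_nil_iff (α : Word A V) :
    rWord r α = [] ↔ onlyVars α ∧ ∀ x ∈ varsW α, r x = [] := by
  simp only [rWord, List.flatMap_eq_nil_iff, onlyVars, varsW, Set.mem_ofPred_eq]
  constructor
  · intro h
    refine ⟨fun c hc => ?_, fun x hx => h _ hx⟩
    cases c with
    | inl a => simpa using h _ hc
    | inr x => exact ⟨x, rfl⟩
  · rintro ⟨honly, hvars⟩ c hc
    obtain ⟨x, rfl⟩ := honly c hc
    exact hvars x hc

def IsNullWitness (p : Set V × Fm A V P F) : Prop :=
  (∀ x ∈ p.1, r x = []) ∧ p.2.eval I r = true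

variable {I r}

theorem isNullWitness_substEps_fmAnd {X : Set V} {φ ψ : Fm A V P F} :
    IsNullWitness I r (X, (fmAnd φ ψ).substEps X) ↔
      (∀ x ∈ X, r x = []) ∧ φ.eval I r = true ∧ ψ.eval I r = true := by
  refine ⟨fun ⟨hX, h⟩ => ?_, fun ⟨hX, hφ, hψ⟩ => ⟨hX, ?_⟩⟩
  · rw [Fm.eval_substEps I r hX, Fm.eval_fmAnd, Bool.and_eq_true] at h
    exact ⟨hX, h⟩
  · rw [Fm.eval_substEps I r hX, Fm.eval_fmAnd, hφ, hψ, Bool.and_self]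

theorem exists_isNullWitness_tensor_iff {S₁ S₂ : Set (Set V × Fm A V P F)} :
    (∃ p ∈ tensor S₁ S₂, IsNullWitness I r p) ↔
      (∃ p ∈ S₁, IsNullWitness I r p) ∧ ∃ p ∈ S₂, IsNullWitness I r p := by
  constructor
  · rintro ⟨_, ⟨q₁, hq₁, q₂, hq₂, rfl⟩, h⟩
    obtain ⟨hX, h₁, h₂⟩ := isNullWitness_substEps_fmAnd.mp h
    exact ⟨⟨q₁, hq₁, fun x hx => hX x (.inl hx), h₁⟩, ⟨q₂, hq₂, fun x hx => hX x (.inr hx), h₂⟩⟩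
  · rintro ⟨⟨q₁, hq₁, hX₁, h₁⟩, ⟨q₂, hq₂, hX₂, h₂⟩⟩
    refine ⟨_, ⟨q₁, hq₁, q₂, hq₂, rfl⟩, isNullWitness_substEps_fmAnd.mpr ⟨?_, h₁, h₂⟩⟩
    rintro x (hx | hx)
    exacts [hX₁ x hx, hX₂ x hx]

theorem exists_isNullWitness_word_iff (α : Word A V) :
    (∃ p ∈ Seps (.word α : CExp A V P F), IsNullWitness I r p) ↔ rWord r α = [] := by
  simp [Seps, IsNullWitness, rWord_eq_nil_iff]

theorem exists_isNullWitness_constr_iff (E : CExp A V P F) (φ : Fm A V P F) :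
    (∃ p ∈ Seps (.constr E φ), IsNullWitness I r p) ↔
      φ.eval I r = true ∧ ∃ p ∈ Seps E, IsNullWitness I r p := by
  simp only [Seps, Set.mem_ofPred_eq]
  constructor
  · rintro ⟨_, ⟨q, hq, rfl⟩, h⟩
    obtain ⟨hX, hφ, hq'⟩ := isNullWitness_substEps_fmAnd.mp h
    exact ⟨hφ, q, hq, hX, hq'⟩
  · rintro ⟨hφ, q, hq, hX, hq'⟩
    exact ⟨_, ⟨q, hq, rfl⟩, isNullWitness_substEps_fmAnd.mpr ⟨hX, hφ, hq'⟩⟩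

theorem exists_isNullWitness_mtch_iff (α : Word A V) (E : CExp A V P F) :
    (∃ p ∈ Seps (.mtch α E), IsNullWitness I r p) ↔
      rWord r α = [] ∧ ∃ p ∈ Seps E, IsNullWitness I r p := by
  have hα : (∃ p ∈ ({(varsW α, fmTrue)} : Set (Set V × Fm A V P F)), IsNullWitness I r p) ↔
      ∀ x ∈ varsW α, r x = [] := by
    simp [IsNullWitness]
  simp only [Seps, Set.mem_ofPred_eq, and_assoc, exists_and_left]
  rw [exists_isNullWitness_tensor_iff, hα, rWord_eq_nil_iff, and_assoc]

end

/-- `Null_{I,r}(E) = 1` iff some pair `(X, φ) ∈ S^ε(E)` satisfies: `r` maps every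
variable of `X` to `ε`, and `eval_{I,r}(φ) = 1`. -/
theorem null_iff_Seps {A V : Type} {P F : ℕ → Type}
    (I : Interp A V P F) (r : V → List A) (E : CExp A V P F) :
    (([] : List A) ∈ CExp.lang I r E) ↔
      ∃ p ∈ Seps E, (∀ x ∈ p.1, r x = []) ∧ Fm.eval I r p.2 = true := by
  change _ ↔ ∃ p ∈ Seps E, IsNullWitness I r p
  induction E with
  | zero => simp [CExp.lang, Seps]
  | word α =>
    rw [exists_isNullWitness_word_iff]
    exact eq_comm
  | plus E₁ E₂ ih₁ ih₂ =>
    simp only [CExp.lang, Language.mem_add, ih₁, ih₂, Seps, Set.mem_union, or_and_right,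
      exists_or]
  | comp E₁ E₂ ih₁ ih₂ =>
    rw [CExp.lang, Language.nil_mem_mul_iff, ih₁, ih₂, Seps, exists_isNullWitness_tensor_iff]
  | star E =>
    simp [CExp.lang, Language.nil_mem_kstar, Seps, IsNullWitness]
  | constr E φ ih =>
    rw [exists_isNullWitness_constr_iff, ← ih, CExp.lang]
    split_ifs with hφ <;> simp [hφ]
  | mtch α E ih =>
    rw [exists_isNullWitness_mtch_iff, ← ih]
    exact and_congr_left' eq_comm
end

section
/- Let φ be a quantifier-free formula such that there exist an interpretation I and a realization r for which eval_{I,r} is injective on the set Term(φ) of terms appearing in φ. Then φ is satisfiable (by some interpretation and realization with domain Σ*) if and only if its propositionalisation T(φ) is satisfiable by a propositional valuation. -/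
open Computability

/-- The atoms `P(t₁,…,t_k)` of formulae: a predicate symbol together with its
argument terms. Each atom gives rise to a propositional variable. -/
def Atom (A V : Type) (P F : ℕ → Type) : Type := Σ k : ℕ, P k × (Fin k → Tm A V F)

/-- Propositional formulae over a set `σ` of propositional symbols. -/
inductive PForm (σ : Type) : Type
  | atom : σ → PForm σ
  | op : {k : ℕ} → ((Fin k → Bool) → Bool) → (Fin k → PForm σ) → PForm σ

/-- Evaluation of a propositional formula under a valuation. -/
def PForm.eval {σ : Type} (v : σ → Bool) : PForm σ → Bool
  | .atom s => v s
  | .op o fs => o fun i => PForm.eval v (fs i)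

/-- The propositionalisation `T(φ)`: each atomic formula `P(t₁,…,t_k)` is replaced
by the propositional symbol `P_{(t₁,…,t_k)}`. -/
def propz {A V : Type} {P F : ℕ → Type} : Fm A V P F → PForm (Atom A V P F)
  | .atom p ts => .atom ⟨_, p, ts⟩
  | .op o fs => .op o fun i => propz (fs i)

/-- The set of atoms occurring in a formula. -/
def Fm.atoms {A V : Type} {P F : ℕ → Type} : Fm A V P F → Set (Atom A V P F)
  | .atom p ts => {⟨_, p, ts⟩}
  | .op _ fs => ⋃ i, Fm.atoms (fs i)

/-- Evaluation of an atom under an interpretation and a realization. -/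
def Atom.eval {A V : Type} {P F : ℕ → Type} (I : Interp A V P F) (r : V → List A) :
    Atom A V P F → Bool
  | ⟨_, p, ts⟩ => I.pr p fun i => Tm.eval I r (ts i)

/-- The set of terms appearing (as arguments of predicates) in a formula. -/
def Fm.terms {A V : Type} {P F : ℕ → Type} : Fm A V P F → Set (Tm A V F)
  | .atom _ ts => Set.range ts
  | .op _ fs => ⋃ i, Fm.terms (fs i)

/-!
A model `(I, r)` of `φ` yields the valuation "atom `a` holds iff `a` is true under `(I, r)`",
since evaluation commutes with propositionalisation. Conversely, given a valuation `v` of `T(φ)`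
and an `(I, r)` injective on `Term(φ)`, keep the function symbols of `I` and let `P` hold of a
tuple of words exactly when it is the value of a tuple `t` of terms of `φ` with `v (P_t)` true.
Injectivity makes `t` unique, so every atom of `φ` then evaluates to its value under `v`.
-/

section

variable {A V : Type} {P F : ℕ → Type}

theorem Fm.eval_eq_eval_propz (I : Interp A V P F) (r : V → List A) (ψ : Fm A V P F) :
    ψ.eval I r = (propz ψ).eval (Atom.eval I r) := by
  induction ψ with
  | atom p ts => rfl
  | op o fs ih => simp only [Fm.eval, propz, PForm.eval, ih]

theorem PForm.eval_propz_congr {v w : Atom A V P F → Bool} {ψ : Fm A V P F}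
    (h : ∀ a ∈ ψ.atoms, v a = w a) : (propz ψ).eval v = (propz ψ).eval w := by
  induction ψ with
  | atom p ts => exact h _ rfl
  | op o fs ih =>
    simp only [propz, PForm.eval]
    congr 1
    funext i
    exact ih i fun a ha => h a (Set.mem_iUnion.2 ⟨i, ha⟩)

theorem Fm.mem_terms_of_mem_atoms {ψ : Fm A V P F} {k : ℕ} {p : P k} {ts : Fin k → Tm A V F}
    (h : ⟨k, p, ts⟩ ∈ ψ.atoms) (i : Fin k) : ts i ∈ ψ.terms := by
  induction ψ with
  | atom q us =>
    cases h
    exact ⟨i, rfl⟩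
  | op o fs ih =>
    obtain ⟨j, hj⟩ := Set.mem_iUnion.1 h
    exact Set.mem_iUnion.2 ⟨j, ih j hj⟩

open Classical in
noncomputable def Interp.realizing (I : Interp A V P F) (r : V → List A) (T : Set (Tm A V F))
    (v : Atom A V P F → Bool) : Interp A V P F where
  fn := I.fn
  pr {k} p ws :=
    if h : ∃ ts : Fin k → Tm A V F, (∀ i, ts i ∈ T) ∧ (fun i => Tm.eval I r (ts i)) = ws
    then v ⟨k, p, h.choose⟩ else false

theorem Tm.eval_realizing (I : Interp A V P F) (r : V → List A) (T : Set (Tm A V F))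
    (v : Atom A V P F → Bool) (t : Tm A V F) :
    t.eval (I.realizing r T v) r = t.eval I r := by
  induction t with
  | var x => rfl
  | eps => rfl
  | ltr a => rfl
  | cat t u iht ihu => simp only [Tm.eval, iht, ihu]
  | app f ts ih => simp only [Tm.eval, ih]; rfl

theorem Atom.eval_realizing {I : Interp A V P F} {r : V → List A} {T : Set (Tm A V F)}
    (hinj : Set.InjOn (Tm.eval I r) T) (v : Atom A V P F → Bool) {k : ℕ} (p : P k)
    {ts : Fin k → Tm A V F} (hts : ∀ i, ts i ∈ T) :
    Atom.eval (I.realizing r T v) r ⟨k, p, ts⟩ = v ⟨k, p, ts⟩ := by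
  have hex : ∃ us : Fin k → Tm A V F, (∀ i, us i ∈ T) ∧
      (fun i => Tm.eval I r (us i)) = fun i => Tm.eval I r (ts i) := ⟨ts, hts, rfl⟩
  obtain ⟨hus, heval⟩ := hex.choose_spec
  have hunique : hex.choose = ts :=
    funext fun i => hinj (hus i) (hts i) (congrFun heval i)
  simp only [Atom.eval, Tm.eval_realizing]
  exact (dif_pos hex).trans (by rw [hunique])

end

/-- If some evaluation `eval_{I,r}` is injective on the terms of `φ`, then `φ` is
satisfiable (by some interpretation with domain `Σ*` and realization) iff its
propositionalisation `T(φ)` is satisfiable by a propositional valuation. -/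
theorem sat_iff_propz_sat {A V : Type} {P F : ℕ → Type} (φ : Fm A V P F)
    (hinj : ∃ (I : Interp A V P F) (r : V → List A),
        Set.InjOn (Tm.eval I r) (Fm.terms φ)) :
    (∃ (I : Interp A V P F) (r : V → List A), Fm.eval I r φ = true) ↔
    (∃ v : Atom A V P F → Bool, PForm.eval v (propz φ) = true) := by
  obtain ⟨I, r, hinj⟩ := hinj
  constructor
  · rintro ⟨J, s, h⟩
    exact ⟨Atom.eval J s, by rwa [← Fm.eval_eq_eval_propz]⟩
  · rintro ⟨v, hv⟩
    refine ⟨I.realizing r φ.terms v, r, ?_⟩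
    rwa [Fm.eval_eq_eval_propz, PForm.eval_propz_congr fun ⟨k, p, ts⟩ ha =>
      Atom.eval_realizing hinj v p (Fm.mem_terms_of_mem_atoms ha)]
end
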